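/- arXiv:1304.5310 — 2 statements merged into one kernel-verified Lean document; each statement's English description precedes it below -/
import Mathlib

section
/- For any f ∈ F_I (i.e., f_0 = 0 and f_i > f_{i*} for all i ∈ T\{0}), one has sup_{j∈T\{0}} II_j(f) ≤ sup_{k∈T\{0}} I_k(f), where I_k(f) = (1/(μ_k q_{kk*}(f_k - f_{k*}))) Σ_{j∈T_k} μ_j f_j and II_j(f) = (1/f_j) Σ_{k∈P(j)} (1/(μ_k q_{kk*})) Σ_{i∈T_k} μ_i f_i. -/
open Finset
open scoped Classical

structure BDTree (V : Type*) [Fintype V] where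
  root : V
  parent : V → V
  layer : V → ℕ
  q : V → V → ℝ
  parent_root : parent root = root
  layer_root : layer root = 0
  layer_parent : ∀ i, i ≠ root → layer i = layer (parent i) + 1
  reach : ∀ i, ∃ n, parent^[n] i = root
  q_pos_up : ∀ i, i ≠ root → 0 < q i (parent i)
  q_pos_down : ∀ i, i ≠ root → 0 < q (parent i) i

namespace BDTree

variable {V : Type*} [Fintype V] (T : BDTree V)

/-- The set of sons of a vertex. -/
noncomputable def sons (i : V) : Finset V :=
  Finset.univ.filter fun j => j ≠ T.root ∧ T.parent j = i

/-- The subtree `T_k` rooted at `k` (including `k`). -/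
noncomputable def subtree (k : V) : Finset V :=
  Finset.univ.filter fun j => ∃ n, T.parent^[n] j = k

/-- The path set `P(i)`: vertices (excluding the root) on the path from `i` to the root. -/
noncomputable def pathSet (i : V) : Finset V :=
  Finset.univ.filter fun k => k ≠ T.root ∧ ∃ n, T.parent^[n] i = k

/-- The symmetric measure `μ`. -/
noncomputable def mu (k : V) : ℝ :=
  ∏ j ∈ T.pathSet k, T.q (T.parent j) j / T.q j (T.parent j)

/-- The operator `Ω`. -/
noncomputable def Omega (g : V → ℝ) (i : V) : ℝ :=
  (∑ j ∈ T.sons i, T.q i j * (g j - g i)) + T.q i (T.parent i) * (g (T.parent i) - g i)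

/-- The set of non-root vertices `T \ {0}`. -/
noncomputable def nonroot : Finset V := Finset.univ.filter fun i => i ≠ T.root

/-- The Dirichlet form `D(f)`. -/
noncomputable def D (f : V → ℝ) : ℝ :=
  ∑ i ∈ T.nonroot, T.mu i * T.q i (T.parent i) * (f i - f (T.parent i)) ^ 2

/-- `μ(f²)`. -/
noncomputable def norm2 (f : V → ℝ) : ℝ := ∑ i ∈ T.nonroot, T.mu i * f i ^ 2

/-- The principal Dirichlet eigenvalue `λ₀`, via the classical variational formula. -/
noncomputable def lam0 : ℝ := sInf {r | ∃ f : V → ℝ, f T.root = 0 ∧ T.norm2 f = 1 ∧ r = T.D f}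

/-- The single-summation operator `I`. -/
noncomputable def opI (f : V → ℝ) (i : V) : ℝ :=
  (∑ j ∈ T.subtree i, T.mu j * f j) /
    (T.mu i * T.q i (T.parent i) * (f i - f (T.parent i)))

/-- The double-summation operator `II`. -/
noncomputable def opII (f : V → ℝ) (i : V) : ℝ :=
  (∑ k ∈ T.pathSet i, (1 / (T.mu k * T.q k (T.parent k))) *
      ∑ j ∈ T.subtree k, T.mu j * f j) / f i

/-- The difference-form operator `R`; at a son of the root the convention `w_0 = ∞`,
`1/∞ = 0` is used, i.e. the term `w i⁻¹` is replaced by `0`. -/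
noncomputable def R (w : V → ℝ) (i : V) : ℝ :=
  T.q i (T.parent i) * (1 - (if T.parent i = T.root then 0 else (w i)⁻¹)) +
    ∑ j ∈ T.sons i, T.q i j * (1 - w j)

/-- Membership in the test-function class `W = {w : w > 1, w_0 = ∞}` (the value at a son
of the root plays the role of `∞` and is not used by `R`). -/
def memW (w : V → ℝ) : Prop := ∀ i, i ≠ T.root → T.parent i ≠ T.root → 1 < w i

/-- `φ_j = Σ_{k∈P(j)} 1/(μ_k q_{kk*})`. -/
noncomputable def phi (j : V) : ℝ :=
  ∑ k ∈ T.pathSet j, 1 / (T.mu k * T.q k (T.parent k))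

end BDTree

/-!
Telescoping along the path to the root, `f_j = ∑_{k ∈ P(j)} (f_k - f_{k*})` with every increment
positive. The `k`-th summand of the numerator of `II_j(f)` is `I_k(f) (f_k - f_{k*})`, so
`II_j(f)` is a weighted mean of the values `I_k(f)`, `k ∈ P(j)`, and cannot exceed their maximum.
-/

theorem Finset.sum_div_sum_le_of_forall_div_le {ι K : Type*} [Field K] [LinearOrder K]
    [IsStrictOrderedRing K] {s : Finset ι} (hs : s.Nonempty) {a b : ι → K} {M : K}
    (hb : ∀ k ∈ s, 0 < b k) (hab : ∀ k ∈ s, a k / b k ≤ M) :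
    (∑ k ∈ s, a k) / ∑ k ∈ s, b k ≤ M := by
  rw [div_le_iff₀ (sum_pos hb hs), mul_sum]
  exact sum_le_sum fun k hk => (div_le_iff₀ (hb k hk)).1 (hab k hk)

namespace BDTree

variable {V : Type*} [Fintype V] (T : BDTree V)

theorem induction_on_parent {P : V → Prop} (root : P T.root)
    (step : ∀ j, j ≠ T.root → P (T.parent j) → P j) (j : V) : P j := by
  obtain ⟨n, hn⟩ := T.reach j
  induction n generalizing j with
  | zero => exact (show j = T.root from hn) ▸ root
  | succ n ih =>
    by_cases hj : j = T.root
    · exact hj ▸ root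
    · exact step j hj (ih (T.parent j) (by rwa [Function.iterate_succ_apply] at hn))

theorem layer_iterate_parent_le (n : ℕ) (i : V) : T.layer (T.parent^[n] i) ≤ T.layer i := by
  induction n generalizing i with
  | zero => rfl
  | succ n ih =>
    rw [Function.iterate_succ_apply]
    refine (ih (T.parent i)).trans ?_
    by_cases hi : i = T.root
    · rw [hi, T.parent_root]
    · rw [T.layer_parent i hi]
      exact Nat.le_succ _

theorem mem_nonroot {i : V} : i ∈ T.nonroot ↔ i ≠ T.root := by
  simp [nonroot]

theorem ne_root_of_mem_pathSet {j k : V} (hk : k ∈ T.pathSet j) : k ≠ T.root :=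
  (mem_filter.1 hk).2.1

theorem mem_pathSet_self {j : V} (hj : j ≠ T.root) : j ∈ T.pathSet j := by
  simpa [pathSet] using ⟨hj, 0, rfl⟩

theorem pathSet_root : T.pathSet T.root = ∅ := by
  simp [pathSet, Function.iterate_fixed T.parent_root, eq_comm]

theorem notMem_pathSet_parent {j : V} (hj : j ≠ T.root) : j ∉ T.pathSet (T.parent j) := by
  intro hmem
  obtain ⟨n, hn⟩ := (mem_filter.1 hmem).2.2
  have hle := T.layer_iterate_parent_le n (T.parent j)
  rw [hn, T.layer_parent j hj] at hle
  omega

theorem pathSet_eq_insert {j : V} (hj : j ≠ T.root) :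
    T.pathSet j = insert j (T.pathSet (T.parent j)) := by
  ext k
  simp only [pathSet, mem_filter, mem_univ, true_and, mem_insert]
  constructor
  · rintro ⟨hk, _ | n, hn⟩
    · exact Or.inl hn.symm
    · exact Or.inr ⟨hk, n, by rwa [Function.iterate_succ_apply] at hn⟩
  · rintro (rfl | ⟨hk, n, hn⟩)
    · exact ⟨hj, 0, rfl⟩
    · exact ⟨hk, n + 1, by rwa [Function.iterate_succ_apply]⟩

theorem sum_pathSet_sub_parent {f : V → ℝ} (hf0 : f T.root = 0) (j : V) :
    ∑ k ∈ T.pathSet j, (f k - f (T.parent k)) = f j := by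
  induction j using T.induction_on_parent with
  | root => rw [pathSet_root, sum_empty, hf0]
  | step j hj ih =>
    rw [T.pathSet_eq_insert hj, sum_insert (T.notMem_pathSet_parent hj), ih, sub_add_cancel]

end BDTree

/-- for `f ∈ F_I`, `sup_j II_j(f) ≤ sup_k I_k(f)`. -/
theorem stmt5 {V : Type*} [Fintype V] (T : BDTree V) (hne : T.nonroot.Nonempty)
    (f : V → ℝ) (hf0 : f T.root = 0)
    (hfinc : ∀ i, i ≠ T.root → f (T.parent i) < f i) :
    T.nonroot.sup' hne (fun j => T.opII f j) ≤ T.nonroot.sup' hne fun k => T.opI f k := by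
  refine sup'_le _ _ fun j hj => ?_
  rw [T.mem_nonroot] at hj
  rw [BDTree.opII, ← T.sum_pathSet_sub_parent hf0 j]
  refine sum_div_sum_le_of_forall_div_le ⟨j, T.mem_pathSet_self hj⟩
    (fun k hk => sub_pos.2 (hfinc k (T.ne_root_of_mem_pathSet hk))) fun k hk => ?_
  calc _ = T.opI f k := by rw [BDTree.opI, one_div_mul_eq_div, div_div]
    _ ≤ _ := le_sup' (fun k => T.opI f k) (T.mem_nonroot.2 (T.ne_root_of_mem_pathSet hk))
end

section
/- (Summation identity on the subtree.) For any function f on a tree T with finite subtree sums, Σ_{j∈T_i} μ_j f_j = μ(T_i) f_i + Σ_{k ∈ T_{J(i)}} μ(T_k)(f_k - f_{k*}), where T_{J(i)} = ⋃_{s∈J(i)} T_s and μ(T_j) = Σ_{k∈T_j} μ_k. -/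
open Finset
open scoped Classical

/-!
Write `μ(T_j) = ∑_{k ∈ T_j} μ_k`. Since `T_j` is the disjoint union of `{j}` and the subtrees of the
sons of `j`, we have `μ_j = μ(T_j) - ∑_{s ∈ J(j)} μ(T_s)`. Substituting this into `∑_{j ∈ T_i} μ_j f_j`
and noting that `(j, s)` with `j ∈ T_i`, `s ∈ J(j)` runs exactly once over the pairs `(k*, k)` with
`k ∈ T_i \ {i}`, the sum becomes `∑_{j ∈ T_i} μ(T_j) f_j - ∑_{k ∈ T_i \ {i}} μ(T_k) f_{k*}`, which
is the claimed identity once the term `j = i` is split off.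
-/

namespace BDTree

variable {V : Type*} [Fintype V] (T : BDTree V)

theorem mem_subtree {j k : V} : j ∈ T.subtree k ↔ ∃ n, T.parent^[n] j = k := by
  simp [subtree]

theorem mem_sons {i j : V} : j ∈ T.sons i ↔ j ≠ T.root ∧ T.parent j = i := by
  simp [sons]

theorem self_mem_subtree (k : V) : k ∈ T.subtree k :=
  T.mem_subtree.2 ⟨0, rfl⟩

theorem mem_subtree_trans {a b c : V} (hab : a ∈ T.subtree b) (hbc : b ∈ T.subtree c) :
    a ∈ T.subtree c := by
  obtain ⟨n, rfl⟩ := T.mem_subtree.1 hab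
  obtain ⟨m, rfl⟩ := T.mem_subtree.1 hbc
  exact T.mem_subtree.2 ⟨m + n, Function.iterate_add_apply _ _ _ _⟩

theorem self_mem_subtree_parent (j : V) : j ∈ T.subtree (T.parent j) :=
  T.mem_subtree.2 ⟨1, rfl⟩

theorem mem_subtree_of_mem_sons {i s : V} (hs : s ∈ T.sons i) : s ∈ T.subtree i :=
  (T.mem_sons.1 hs).2 ▸ T.self_mem_subtree_parent s

theorem eq_root_of_isPeriodicPt {j : V} {n : ℕ} (hn : 0 < n)
    (hj : Function.IsPeriodicPt T.parent n j) : j = T.root := by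
  obtain ⟨r, hr⟩ := T.reach j
  calc j = T.parent^[n * r] j := ((hj.mul_const r).eq).symm
    _ = T.parent^[n * r - r] (T.parent^[r] j) := by
      rw [← Function.iterate_add_apply, Nat.sub_add_cancel (Nat.le_mul_of_pos_left r hn)]
    _ = T.root := by rw [hr, Function.iterate_fixed T.parent_root]

theorem parent_ne_self {j : V} (hj : j ≠ T.root) : T.parent j ≠ j :=
  fun h => hj (T.eq_root_of_isPeriodicPt one_pos h)

theorem eq_of_mem_subtree_of_mem_subtree {j k : V} (hjk : j ∈ T.subtree k)
    (hkj : k ∈ T.subtree j) : j = k := by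
  obtain ⟨n, rfl⟩ := T.mem_subtree.1 hjk
  obtain ⟨m, hm⟩ := T.mem_subtree.1 hkj
  rcases Nat.eq_zero_or_pos (m + n) with hmn | hmn
  · rw [Nat.eq_zero_of_add_eq_zero_left hmn, Function.iterate_zero_apply]
  · have hroot : j = T.root := T.eq_root_of_isPeriodicPt hmn <| by
      rwa [Function.IsPeriodicPt, Function.IsFixedPt, Function.iterate_add_apply]
    subst hroot
    exact (Function.iterate_fixed T.parent_root n).symm

theorem self_notMem_sons {i : V} : i ∉ T.sons i :=
  fun h => T.parent_ne_self (T.mem_sons.1 h).1 (T.mem_sons.1 h).2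

theorem parent_mem_subtree {j k : V} (hjk : j ∈ T.subtree k) (hne : j ≠ k) :
    T.parent j ∈ T.subtree k := by
  obtain ⟨_ | n, hn⟩ := T.mem_subtree.1 hjk
  · exact absurd hn hne
  · exact T.mem_subtree.2 ⟨n, hn⟩

theorem exists_mem_sons_of_mem_subtree {i j : V} (hj : j ∈ T.subtree i) (hne : j ≠ i) :
    ∃ s ∈ T.sons i, j ∈ T.subtree s := by
  obtain ⟨n, hn⟩ := T.mem_subtree.1 hj
  induction n generalizing j with
  | zero => exact absurd hn hne
  | succ n ih =>
    by_cases hp : T.parent j = i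
    · refine ⟨j, T.mem_sons.2 ⟨fun hr => hne ?_, hp⟩, T.self_mem_subtree j⟩
      rw [← hp, hr, T.parent_root]
    · obtain ⟨s, hs, hps⟩ := ih (T.parent_mem_subtree hj hne) hp hn
      exact ⟨s, hs, T.mem_subtree_trans (T.self_mem_subtree_parent j) hps⟩

theorem mem_subtree_or_mem_subtree {a b k : V} (ha : k ∈ T.subtree a) (hb : k ∈ T.subtree b) :
    a ∈ T.subtree b ∨ b ∈ T.subtree a := by
  obtain ⟨n, rfl⟩ := T.mem_subtree.1 ha
  obtain ⟨m, rfl⟩ := T.mem_subtree.1 hb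
  rcases le_total n m with h | h
  · obtain ⟨d, rfl⟩ := Nat.exists_eq_add_of_le h
    exact Or.inl (T.mem_subtree.2 ⟨d, by rw [← Function.iterate_add_apply, add_comm]⟩)
  · obtain ⟨d, rfl⟩ := Nat.exists_eq_add_of_le h
    exact Or.inr (T.mem_subtree.2 ⟨d, by rw [← Function.iterate_add_apply, add_comm]⟩)

theorem notMem_subtree_of_mem_sons {i a b : V} (ha : a ∈ T.sons i) (hb : b ∈ T.sons i)
    (hab : a ≠ b) : a ∉ T.subtree b := by
  intro hmem
  have hib : i ∈ T.subtree b := (T.mem_sons.1 ha).2 ▸ T.parent_mem_subtree hmem hab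
  have hbi : b = i := (T.eq_of_mem_subtree_of_mem_subtree hib (T.mem_subtree_of_mem_sons hb)).symm
  exact T.self_notMem_sons (hbi ▸ hb)

theorem pairwiseDisjoint_subtree_sons (i : V) :
    Set.PairwiseDisjoint (T.sons i : Set V) T.subtree := by
  intro a ha b hb hab
  refine Finset.disjoint_left.2 fun k hka hkb => ?_
  rcases T.mem_subtree_or_mem_subtree hka hkb with h | h
  · exact T.notMem_subtree_of_mem_sons ha hb hab h
  · exact T.notMem_subtree_of_mem_sons hb ha hab.symm h

theorem biUnion_sons_subtree (i : V) :
    (T.sons i).biUnion T.subtree = (T.subtree i).erase i := by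
  ext k
  simp only [Finset.mem_biUnion, Finset.mem_erase]
  constructor
  · rintro ⟨s, hs, hks⟩
    have hki : k ∈ T.subtree i := T.mem_subtree_trans hks (T.mem_subtree_of_mem_sons hs)
    refine ⟨fun hk => ?_, hki⟩
    subst hk
    rw [T.eq_of_mem_subtree_of_mem_subtree (T.mem_subtree_of_mem_sons hs) hks] at hs
    exact T.self_notMem_sons hs
  · rintro ⟨hne, hk⟩
    exact T.exists_mem_sons_of_mem_subtree hk hne

theorem biUnion_subtree_sons (i : V) :
    (T.subtree i).biUnion T.sons = (T.subtree i).erase i := by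
  ext k
  simp only [Finset.mem_biUnion, Finset.mem_erase, mem_sons]
  constructor
  · rintro ⟨j, hj, hkr, rfl⟩
    have hk : k ∈ T.subtree i := T.mem_subtree_trans (T.self_mem_subtree_parent k) hj
    refine ⟨fun hki => T.parent_ne_self hkr ?_, hk⟩
    subst hki
    exact T.eq_of_mem_subtree_of_mem_subtree hj (T.self_mem_subtree_parent _)
  · rintro ⟨hne, hk⟩
    refine ⟨T.parent k, T.parent_mem_subtree hk hne, fun hkr => hne ?_, rfl⟩
    subst hkr
    obtain ⟨n, hn⟩ := T.mem_subtree.1 hk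
    rw [← hn, Function.iterate_fixed T.parent_root]

variable {M : Type*} [AddCommMonoid M]

theorem sum_subtree_eq_add_sum_sons (g : V → M) (j : V) :
    ∑ k ∈ T.subtree j, g k = g j + ∑ s ∈ T.sons j, ∑ k ∈ T.subtree s, g k := by
  rw [← Finset.add_sum_erase _ _ (T.self_mem_subtree j), ← biUnion_sons_subtree,
    Finset.sum_biUnion (T.pairwiseDisjoint_subtree_sons j)]

theorem sum_subtree_sum_sons (h : V → M) (i : V) :
    ∑ j ∈ T.subtree i, ∑ s ∈ T.sons j, h s = ∑ k ∈ (T.subtree i).erase i, h k := by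
  rw [← biUnion_subtree_sons, Finset.sum_biUnion]
  intro a _ b _ hab
  exact Finset.disjoint_left.2 fun k hka hkb =>
    hab ((T.mem_sons.1 hka).2.symm.trans (T.mem_sons.1 hkb).2)

theorem sum_subtree_mul_eq {R : Type*} [CommRing R] (w f : V → R) (i : V) :
    ∑ j ∈ T.subtree i, w j * f j =
      (∑ k ∈ T.subtree i, w k) * f i +
        ∑ k ∈ (T.subtree i).erase i, (∑ j ∈ T.subtree k, w j) * (f k - f (T.parent k)) := by
  set m : V → R := fun k => ∑ j ∈ T.subtree k, w j
  have hw : ∀ j, w j = m j - ∑ s ∈ T.sons j, m s := fun j => by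
    simp only [m, T.sum_subtree_eq_add_sum_sons w j, add_sub_cancel_right]
  have hsons : ∀ j, ∑ s ∈ T.sons j, m s * f (T.parent s) = (∑ s ∈ T.sons j, m s) * f j :=
    fun j => by
      rw [Finset.sum_mul]
      exact Finset.sum_congr rfl fun s hs => by rw [(T.mem_sons.1 hs).2]
  calc ∑ j ∈ T.subtree i, w j * f j
      = ∑ j ∈ T.subtree i, m j * f j
          - ∑ j ∈ T.subtree i, ∑ s ∈ T.sons j, m s * f (T.parent s) := by
        rw [← Finset.sum_sub_distrib]
        exact Finset.sum_congr rfl fun j _ => by rw [hsons, hw j, sub_mul]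
    _ = m i * f i + ∑ k ∈ (T.subtree i).erase i, m k * f k
          - ∑ k ∈ (T.subtree i).erase i, m k * f (T.parent k) := by
        rw [T.sum_subtree_sum_sons, ← Finset.add_sum_erase _ _ (T.self_mem_subtree i)]
    _ = m i * f i + ∑ k ∈ (T.subtree i).erase i, m k * (f k - f (T.parent k)) := by
        simp only [mul_sub, Finset.sum_sub_distrib, add_sub_assoc]

end BDTree

/-- the summation identity on the subtree. -/
theorem stmt12 {V : Type*} [Fintype V] (T : BDTree V) (f : V → ℝ) (i : V) :
    ∑ j ∈ T.subtree i, T.mu j * f j =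
      (∑ k ∈ T.subtree i, T.mu k) * f i +
        ∑ k ∈ (T.sons i).biUnion (fun s => T.subtree s),
          (∑ j ∈ T.subtree k, T.mu j) * (f k - f (T.parent k)) := by
  rw [T.biUnion_sons_subtree]
  exact T.sum_subtree_mul_eq T.mu f i
end
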